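/- Let k be a field, let g_1,…,g_r ∈ k[x_1,…,x_n], let p ∈ kⁿ with g_l(p) = 0 for all l, and let A = k[x_1,…,x_n]/⟨g_1,…,g_r⟩. Suppose the localization A_{m_p} is a regular local ring of Krull dimension n − r, and suppose S ⊆ {1,…,n} is a set of r column indices such that the r × r minor of the Jacobian matrix ((∂g_l/∂x_j)(p)) on the columns in S is nonzero. Then the images of the n − r elements {x_j − p_j : j ∉ S} generate the maximal ideal of A_{m_p}; that is, they form a regular system of parameters of the local ring of W = V(g_1,…,g_r) at p. -/

import Mathlib

open MvPolynomial

/-- The maximal ideal of `k[x_1,…,x_n]` of polynomials vanishing at the point `p`,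
i.e. the kernel of the evaluation map at `p` (equivalently `⟨x_1 - p_1, …, x_n - p_n⟩`). -/
noncomputable def mP {k : Type} [Field k] {n : ℕ} (p : Fin n → k) :
    Ideal (MvPolynomial (Fin n) k) :=
  RingHom.ker (eval p)

theorem mP_isMaximal {k : Type} [Field k] {n : ℕ} (p : Fin n → k) : (mP p).IsMaximal :=
  RingHom.ker_isMaximal_of_surjective _ (fun x => ⟨C x, eval_C x⟩)

/-- For `I ≤ m_p`, the ideal `m_p/I` of the quotient ring is maximal. -/
theorem qP_isMaximal {k : Type} [Field k] {n : ℕ} (p : Fin n → k)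
    (I : Ideal (MvPolynomial (Fin n) k)) (hI : I ≤ mP p) :
    (Ideal.map (Ideal.Quotient.mk I) (mP p)).IsMaximal := by
  rcases Ideal.map_eq_top_or_isMaximal_of_surjective (Ideal.Quotient.mk I)
      Ideal.Quotient.mk_surjective (mP_isMaximal p) with h | h
  · exfalso
    have h2 := congrArg (Ideal.comap (Ideal.Quotient.mk I)) h
    rw [Ideal.comap_map_of_surjective _ Ideal.Quotient.mk_surjective, Ideal.comap_top] at h2
    have hk : Ideal.comap (Ideal.Quotient.mk I) ⊥ = I := by
      simpa [RingHom.ker] using Ideal.mk_ker (I := I)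
    rw [hk, sup_eq_left.mpr hI] at h2
    exact (mP_isMaximal p).ne_top h2
  · exact h

/-- A local ring is regular if its Krull dimension equals the dimension of
its cotangent space `m/m²` over the residue field. -/
def IsRegularLocal (R : Type) [CommRing R] [IsLocalRing R] : Prop :=
  ringKrullDim R =
    (Module.finrank (IsLocalRing.ResidueField R) (IsLocalRing.CotangentSpace R) : WithBot ℕ∞)


/-! Taylor expansion at `p` shows that `g_l` is congruent to its differential
`∑ j, ∂g_l/∂x_j(p) • (x_j - p_j)` modulo `m_p²`. Since `g_l = 0` in the local ring, these `r`
differentials vanish in `m/m²`, and the nonzero minor lets us solve these linear relations for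
the `x_j - p_j` with `j ∈ S`. Hence the remaining `x_j - p_j` span `m/m²`, and so generate `m` by
Nakayama's lemma. -/

namespace Matrix

theorem mem_of_mulVec_mem_of_isUnit_det_submatrix {A m n : Type*} [CommRing A] [Fintype m]
    [DecidableEq m] [Fintype n] (I : Ideal A) (M : Matrix m n A) (e : m ↪ n)
    (hM : IsUnit (M.submatrix id e).det) (z : n → A) (hMz : ∀ l, (M *ᵥ z) l ∈ I)
    (hz : ∀ i ∉ Set.range e, z i ∈ I) (i : n) : z i ∈ I := by
  classical
  by_cases hi : i ∉ Set.range e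
  · exact hz i hi
  obtain ⟨t, rfl⟩ := not_not.mp hi
  set N := M.submatrix id e
  have hNz : ∀ l, (N *ᵥ (z ∘ e)) l ∈ I := by
    intro l
    have hrest : ∑ i ∈ (Finset.univ.map e)ᶜ, M l i * z i ∈ I :=
      Ideal.sum_mem _ fun i hi => I.mul_mem_left _ (hz i (by simpa using hi))
    have hsplit := Finset.sum_add_sum_compl (Finset.univ.map e) fun i => M l i * z i
    rw [Finset.sum_map] at hsplit
    rw [show (N *ᵥ (z ∘ e)) l = (M *ᵥ z) l - _ from eq_sub_of_add_eq hsplit]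
    exact sub_mem (hMz l) hrest
  have hinv : z ∘ e = N⁻¹ *ᵥ (N *ᵥ (z ∘ e)) := by
    rw [mulVec_mulVec, nonsing_inv_mul _ hM, one_mulVec]
  rw [← Function.comp_apply (f := z), hinv]
  exact Ideal.sum_mem _ fun l _ => I.mul_mem_left _ (hNz l)

end Matrix

theorem IsLocalRing.eq_maximalIdeal_of_le_sup_sq {R : Type*} [CommRing R] [IsLocalRing R]
    [IsNoetherianRing R] {J : Ideal R} (hJ : J ≤ maximalIdeal R)
    (hsq : maximalIdeal R ≤ J ⊔ maximalIdeal R ^ 2) : J = maximalIdeal R :=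
  hJ.antisymm <| Submodule.le_of_le_smul_of_le_jacobson_bot (IsNoetherian.noetherian _)
    (jacobson_eq_maximalIdeal ⊥ bot_ne_top).ge (by rwa [smul_eq_mul, ← pow_two])

section

variable {k : Type} [Field k] {n : ℕ}

theorem X_sub_C_mem_mP (p : Fin n → k) (i : Fin n) : X i - C (p i) ∈ mP p := by
  simp [mP]

theorem sub_C_eval_mem_span_X_sub_C (p : Fin n → k) (f : MvPolynomial (Fin n) k) :
    f - C (eval p f) ∈ Ideal.span (Set.range fun i => X i - C (p i)) := by
  induction f using MvPolynomial.induction_on with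
  | C a => simp
  | add f g hf hg =>
    rw [map_add, map_add, add_sub_add_comm]
    exact add_mem hf hg
  | mul_X f i hf =>
    rw [show f * X i - C (eval p (f * X i)) = f * (X i - C (p i)) + C (p i) * (f - C (eval p f))
      by simp only [map_mul, eval_X]; ring]
    exact add_mem (Ideal.mul_mem_left _ _ (Ideal.subset_span ⟨i, rfl⟩))
      (Ideal.mul_mem_left _ _ hf)

theorem mP_eq_span_X_sub_C (p : Fin n → k) :
    mP p = Ideal.span (Set.range fun i => X i - C (p i)) := by
  refine le_antisymm (fun f hf => ?_) (Ideal.span_le.mpr <| Set.range_subset_iff.mpr <|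
    X_sub_C_mem_mP p)
  simpa [show eval p f = 0 from hf] using sub_C_eval_mem_span_X_sub_C p f

theorem sub_C_eval_sub_sum_pderiv_mem_mP_sq (p : Fin n → k) (f : MvPolynomial (Fin n) k) :
    f - C (eval p f) - ∑ i, C (eval p (pderiv i f)) * (X i - C (p i)) ∈ mP p ^ 2 := by
  induction f using MvPolynomial.induction_on with
  | C a => simp
  | add f g hf hg =>
    convert add_mem hf hg using 1
    simp only [map_add, add_mul, Finset.sum_add_distrib]
    ring
  | mul_X f j hf =>
    classical
    have hsum : ∑ i, C (eval p (pderiv i (f * X j))) * (X i - C (p i)) =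
        C (p j) * ∑ i, C (eval p (pderiv i f)) * (X i - C (p i)) +
          C (eval p f) * (X j - C (p j)) := by
      simp only [Derivation.leibniz, pderiv_X, smul_eq_mul, map_add, map_mul, eval_X,
        Pi.single_apply, mul_ite, mul_one, mul_zero, apply_ite (eval p), apply_ite C, map_zero,
        add_mul, Finset.sum_add_distrib, ite_mul, zero_mul, Finset.sum_ite_eq, Finset.mem_univ,
        if_true, Finset.mul_sum, mul_assoc]
      ring
    have hlin : ∑ i, C (eval p (pderiv i f)) * (X i - C (p i)) ∈ mP p :=
      Ideal.sum_mem _ fun i _ => Ideal.mul_mem_left _ _ (X_sub_C_mem_mP p i)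
    rw [hsum, map_mul, eval_X, map_mul, pow_two]
    convert add_mem (Ideal.mul_mem_right (X j) _ (pow_two (mP p) ▸ hf))
      (Ideal.mul_mem_mul hlin (X_sub_C_mem_mP p j)) using 1
    ring

open IsLocalRing Matrix in
theorem span_X_sub_C_compl_eq_maximalIdeal {r : ℕ} {R : Type*} [CommRing R] [IsLocalRing R]
    [IsNoetherianRing R] (g : Fin r → MvPolynomial (Fin n) k) (p : Fin n → k)
    (h0 : ∀ l, eval p (g l) = 0) (e : Fin r ↪ Fin n)
    (hminor : (Matrix.of fun l l' : Fin r => eval p (pderiv (e l') (g l))).det ≠ 0)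
    (ψ : MvPolynomial (Fin n) k →+* R) (hψg : ∀ l, ψ (g l) = 0)
    (hψ : (mP p).map ψ = maximalIdeal R) :
    Ideal.span (Set.range fun j : {j // j ∉ Set.range e} => ψ (X j.1 - C (p j.1))) =
      maximalIdeal R := by
  set z : Fin n → R := fun i => ψ (X i - C (p i))
  have hmax : maximalIdeal R = Ideal.span (Set.range z) := by
    rw [← hψ, mP_eq_span_X_sub_C, Ideal.map_span, ← Set.range_comp]
    rfl
  have hz : ∀ i, z i ∈ maximalIdeal R := fun i =>
    hψ ▸ Ideal.mem_map_of_mem ψ (X_sub_C_mem_mP p i)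
  set jac := (Matrix.of fun l i => eval p (pderiv i (g l))).map (ψ.comp C) with hjac_def
  have hjac : ∀ l, (jac *ᵥ z) l ∈ maximalIdeal R ^ 2 := by
    intro l
    have := Ideal.mem_map_of_mem ψ (neg_mem (sub_C_eval_sub_sum_pderiv_mem_mP_sq p (g l)))
    rw [Ideal.map_pow, hψ] at this
    simpa [h0 l, hψg l, map_sum, jac, z, Matrix.mulVec, dotProduct] using this
  have hdet : IsUnit (jac.submatrix id e).det := by
    rw [hjac_def, submatrix_map, ← RingHom.mapMatrix_apply, ← RingHom.map_det]
    exact (isUnit_iff_ne_zero.mpr hminor).map _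
  refine eq_maximalIdeal_of_le_sup_sq (Ideal.span_le.mpr <| Set.range_subset_iff.mpr fun j => hz j)
    (hmax.le.trans <| Ideal.span_le.mpr <| Set.range_subset_iff.mpr fun i => ?_)
  exact mem_of_mulVec_mem_of_isUnit_det_submatrix _ jac e hdet z
    (fun l => Ideal.mem_sup_right (hjac l))
    (fun i hi => Ideal.mem_sup_left <| Ideal.subset_span <|
      Set.mem_range_self (⟨i, hi⟩ : {j // j ∉ Set.range e})) i

end

/-- If `W = V(g_1,…,g_r)` is a non-singular complete intersection of codimension `r` at `p`
and the `r × r` minor of the Jacobian matrix on the columns `S = range e` is nonzero at `p`,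
then the images of the `n - r` elements `{x_j - p_j : j ∉ S}` generate the maximal ideal of
the local ring of `W` at `p`, i.e. they form a regular system of parameters. -/
theorem regular_system_of_parameters_from_minor {k : Type} [Field k] {n r : ℕ}
    (g : Fin r → MvPolynomial (Fin n) k) (p : Fin n → k)
    (h0 : ∀ l, eval p (g l) = 0) (e : Fin r ↪ Fin n)
    (hminor : (Matrix.of fun l l' : Fin r => eval p (pderiv (e l') (g l))).det ≠ 0) :
    letI hle : Ideal.span (Set.range g) ≤ mP p :=
      Ideal.span_le.mpr (Set.range_subset_iff.mpr fun l => RingHom.mem_ker.mpr (h0 l))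
    letI := (qP_isMaximal p (Ideal.span (Set.range g)) hle).isPrime
    (IsRegularLocal (Localization.AtPrime
        (Ideal.map (Ideal.Quotient.mk (Ideal.span (Set.range g))) (mP p))) →
      ringKrullDim (Localization.AtPrime
          (Ideal.map (Ideal.Quotient.mk (Ideal.span (Set.range g))) (mP p))) =
        ((n - r : ℕ) : WithBot ℕ∞) →
      Ideal.span (Set.range fun j : {j : Fin n // j ∉ Set.range e} =>
          algebraMap (MvPolynomial (Fin n) k ⧸ Ideal.span (Set.range g))
            (Localization.AtPrime
              (Ideal.map (Ideal.Quotient.mk (Ideal.span (Set.range g))) (mP p)))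
            (Ideal.Quotient.mk (Ideal.span (Set.range g)) (X j.1 - C (p j.1)))) =
        IsLocalRing.maximalIdeal (Localization.AtPrime
          (Ideal.map (Ideal.Quotient.mk (Ideal.span (Set.range g))) (mP p)))) := by
  intro _ _
  have hle : Ideal.span (Set.range g) ≤ mP p :=
    Ideal.span_le.mpr (Set.range_subset_iff.mpr fun l => RingHom.mem_ker.mpr (h0 l))
  have := (qP_isMaximal p (Ideal.span (Set.range g)) hle).isPrime
  have hspan := span_X_sub_C_compl_eq_maximalIdeal g p h0 e hminor (R := Localization.AtPrime
        (Ideal.map (Ideal.Quotient.mk (Ideal.span (Set.range g))) (mP p)))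
    ((algebraMap (MvPolynomial (Fin n) k ⧸ Ideal.span (Set.range g))
        (Localization.AtPrime
          (Ideal.map (Ideal.Quotient.mk (Ideal.span (Set.range g))) (mP p)))).comp
      (Ideal.Quotient.mk (Ideal.span (Set.range g))))
    (fun l => by
      rw [RingHom.comp_apply, Ideal.Quotient.eq_zero_iff_mem.mpr
        (Ideal.subset_span (Set.mem_range_self l)), map_zero])
    (by rw [← Ideal.map_map]; exact Localization.AtPrime.map_eq_maximalIdeal)
  exact hspan
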